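/- Let p > 2 and set d_k = δ_k/δ_{k−1} for k ≥ 1, where (δ_k) and (a_k) are the bubble sequences. Then for every k ≥ 1 one has a_{k−1} > a_k and d_k < d_{k+1}; moreover a_k → 0 and d_k → 1 as k → ∞. -/

import Mathlib

open Filter Set

private lemma hasDerivAt_phi (p : ℝ) {x : ℝ} (hx : x ≠ 0) :
    HasDerivAt (fun t : ℝ => 2*p*(1-t)*(1+t^(p-1)) - 4*(1-t^p))
      (2*p*(-1)*(1+x^(p-1)) + 2*p*(1-x)*((p-1)*x^(p-1-1)) - 4*(-(p*x^(p-1)))) x := by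
  have h1 : HasDerivAt (fun t : ℝ => 2*p*(1-t)) (2*p*(-1)) x :=
    ((hasDerivAt_id x).const_sub 1).const_mul (2*p)
  have h2 : HasDerivAt (fun t : ℝ => 1 + t^(p-1)) ((p-1)*x^(p-1-1)) x :=
    (Real.hasDerivAt_rpow_const (Or.inl hx)).const_add 1
  have h3 : HasDerivAt (fun t : ℝ => 4*(1-t^p)) (4*(-(p*x^(p-1)))) x :=
    ((Real.hasDerivAt_rpow_const (Or.inl hx)).const_sub 1).const_mul 4
  exact (h1.mul h2).sub h3

private lemma hasDerivAt_psi (p : ℝ) {x : ℝ} (hx : x ≠ 0) :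
    HasDerivAt (fun t : ℝ => 2*p*(-1)*(1+t^(p-1)) + 2*p*(1-t)*((p-1)*t^(p-1-1)) - 4*(-(p*t^(p-1))))
      ((2*p*(-1))*((p-1)*x^(p-1-1)) +
        (2*p*(-1)*((p-1)*x^(p-1-1)) + 2*p*(1-x)*((p-1)*((p-1-1)*x^(p-1-1-1)))) -
        4*(-(p*((p-1)*x^(p-1-1))))) x := by
  have h1 : HasDerivAt (fun t : ℝ => 2*p*(-1)*(1+t^(p-1))) ((2*p*(-1))*((p-1)*x^(p-1-1))) x :=
    ((Real.hasDerivAt_rpow_const (Or.inl hx)).const_add 1).const_mul (2*p*(-1))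
  have h2 : HasDerivAt (fun t : ℝ => 2*p*(1-t)) (2*p*(-1)) x :=
    ((hasDerivAt_id x).const_sub 1).const_mul (2*p)
  have h3 : HasDerivAt (fun t : ℝ => (p-1)*t^(p-1-1)) ((p-1)*((p-1-1)*x^(p-1-1-1))) x :=
    (Real.hasDerivAt_rpow_const (Or.inl hx)).const_mul (p-1)
  have h4 : HasDerivAt (fun t : ℝ => 4*(-(p*t^(p-1)))) (4*(-(p*((p-1)*x^(p-1-1))))) x :=
    (((Real.hasDerivAt_rpow_const (Or.inl hx)).const_mul p).neg).const_mul 4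
  exact (h1.add (h2.mul h3)).sub h4

private lemma psi_neg {p : ℝ} (hp : 2 < p) {x : ℝ} (hx0 : 0 < x) (hx1 : x < 1) :
    2*p*(-1)*(1+x^(p-1)) + 2*p*(1-x)*((p-1)*x^(p-1-1)) - 4*(-(p*x^(p-1))) < 0 := by
  set ψ : ℝ → ℝ :=
    fun t => 2*p*(-1)*(1+t^(p-1)) + 2*p*(1-t)*((p-1)*t^(p-1-1)) - 4*(-(p*t^(p-1))) with hψ
  have hmono : StrictMonoOn ψ (Set.Icc x 1) := by
    apply strictMonoOn_of_deriv_pos (convex_Icc x 1)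
    · intro y hy
      exact (hasDerivAt_psi p (ne_of_gt (lt_of_lt_of_le hx0 hy.1))).continuousAt.continuousWithinAt
    · intro y hy
      rw [interior_Icc] at hy
      have hy0 : 0 < y := lt_trans hx0 hy.1
      rw [(hasDerivAt_psi p hy0.ne').deriv]
      have he : (2*p*(-1))*((p-1)*y^(p-1-1)) +
        (2*p*(-1)*((p-1)*y^(p-1-1)) + 2*p*(1-y)*((p-1)*((p-1-1)*y^(p-1-1-1)))) -
        4*(-(p*((p-1)*y^(p-1-1)))) = 2*p*(p-1)*(p-1-1)*((1-y)*y^(p-1-1-1)) := by ring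
      rw [he]
      have h5 : (0:ℝ) < y ^ (p-1-1-1) := Real.rpow_pos_of_pos hy0 _
      have h6 : (0:ℝ) < 1 - y := by linarith [hy.2]
      have h7 : (0:ℝ) < 2*p*(p-1)*(p-1-1) :=
        mul_pos (mul_pos (by linarith : (0:ℝ) < 2*p) (by linarith : (0:ℝ) < p-1)) (by linarith : (0:ℝ) < p-1-1)
      positivity
  have hψ1 : ψ 1 = 0 := by
    simp only [hψ, Real.one_rpow]
    ring
  have := hmono ⟨le_refl x, hx1.le⟩ ⟨hx1.le, le_refl 1⟩ hx1
  rw [hψ1] at this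
  simpa [hψ] using this

private lemma keyPhi {p : ℝ} (hp : 2 < p) {d : ℝ} (hd : d ∈ Set.Ioo (0:ℝ) 1) :
    4 * (1 - d ^ p) < 2 * p * (1 - d) * (1 + d ^ (p - 1)) := by
  obtain ⟨hd0, hd1⟩ := hd
  set φ : ℝ → ℝ := fun t => 2*p*(1-t)*(1+t^(p-1)) - 4*(1-t^p) with hφ
  have hanti : StrictAntiOn φ (Set.Icc 0 1) := by
    apply strictAntiOn_of_deriv_neg (convex_Icc 0 1)
    · apply continuousOn_of_forall_continuousAt
      intro y _
      have c1 : ContinuousAt (fun t : ℝ => t ^ (p-1)) y :=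
        Real.continuousAt_rpow_const y (p-1) (Or.inr (by linarith))
      have c2 : ContinuousAt (fun t : ℝ => t ^ p) y :=
        Real.continuousAt_rpow_const y p (Or.inr (by linarith))
      exact ((continuousAt_const.mul (continuousAt_const.sub continuousAt_id)).mul
        (continuousAt_const.add c1)).sub (continuousAt_const.mul (continuousAt_const.sub c2))
    · intro y hy
      rw [interior_Icc] at hy
      rw [(hasDerivAt_phi p hy.1.ne').deriv]
      exact psi_neg hp hy.1 hy.2
  have h10 : φ 1 = 0 := by
    simp only [hφ, Real.one_rpow]
    ring
  have := hanti ⟨hd0.le, hd1.le⟩ ⟨zero_le_one, le_refl 1⟩ hd1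
  rw [h10] at this
  have : 0 < 2*p*(1-d)*(1+d^(p-1)) - 4*(1-d^p) := by simpa [hφ] using this
  linarith

private lemma secant_le {p : ℝ} (hp : 2 < p) {x y : ℝ} (hx : 0 < x) (hxy : x ≤ y) (hy : y < 1) :
    (1 - x ^ p) / (1 - x) ≤ (1 - y ^ p) / (1 - y) := by
  have hx1 : x < 1 := lt_of_le_of_lt hxy hy
  have hc := (convexOn_rpow (p := p) (by linarith)).secant_mono (a := 1) (x := x) (y := y)
    (Set.mem_Ici.mpr zero_le_one) (Set.mem_Ici.mpr hx.le) (Set.mem_Ici.mpr (lt_of_lt_of_le hx hxy).le)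
    (ne_of_lt hx1) (ne_of_lt hy) hxy
  rw [Real.one_rpow] at hc
  have e1 : (1 - x^p)/(1-x) = (x^p - 1)/(x-1) := by
    rw [show (1:ℝ)-x^p = -(x^p-1) by ring, show (1:ℝ)-x = -(x-1) by ring, neg_div_neg_eq]
  have e2 : (1 - y^p)/(1-y) = (y^p - 1)/(y-1) := by
    rw [show (1:ℝ)-y^p = -(y^p-1) by ring, show (1:ℝ)-y = -(y-1) by ring, neg_div_neg_eq]
  rw [e1, e2]
  exact hc

private lemma aux_main (p : ℝ) (hp : 2 < p) (a d : ℕ → ℝ)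
    (hd0 : ∀ k, 0 < d k) (hd1 : ∀ k, d k < 1) (hapos : ∀ k, 0 < a k)
    (heq : ∀ k, 2 * p / (2 + a k) * (1 - d k) - 1 + d k ^ p = 0)
    (hrec : ∀ k, a (k + 1) = 2 - d k ^ (p - 1) * (2 + a k)) :
    (∀ k, a (k + 1) < a k) ∧ (∀ k, d k < d (k + 1)) ∧
      Tendsto a atTop (nhds 0) ∧ Tendsto d atTop (nhds 1) := by
  have hane : ∀ k, (2 + a k) ≠ 0 := fun k => by have := hapos k; positivity
  have hcon : ∀ k, 2*p*(1 - d k) = (2 + a k)*(1 - d k ^ p) := by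
    intro k
    have h := heq k
    have hne := hane k
    field_simp at h
    nlinarith [h]
  have hdp1 : ∀ k, 0 < 1 - d k ^ p := fun k => by
    have : d k ^ p < 1 := Real.rpow_lt_one (hd0 k).le (hd1 k) (by linarith); linarith
  have part1 : ∀ k, a (k + 1) < a k := by
    intro k
    have hkey := keyPhi hp ⟨hd0 k, hd1 k⟩
    have h5 : 4*(1 - d k ^ p) < ((2 + a k)*(1 + d k ^ (p-1)))*(1 - d k ^ p) :=
      calc 4*(1 - d k ^ p) < 2*p*(1-d k)*(1+d k^(p-1)) := hkey
        _ = ((2 + a k)*(1 + d k ^ (p-1)))*(1 - d k ^ p) := by rw [hcon k]; ring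
    have h4 : 4 < (2 + a k)*(1 + d k ^ (p-1)) :=
      lt_of_mul_lt_mul_right h5 (hdp1 k).le
    have he := hrec k
    nlinarith [h4, he]
  have hval : ∀ k, (1 - d k ^ p)/(1 - d k) = 2*p/(2 + a k) := by
    intro k
    rw [div_eq_div_iff (by linarith [hd1 k]) (hane k)]
    linear_combination -(hcon k)
  have part2 : ∀ k, d k < d (k + 1) := by
    intro k
    by_contra hc2
    push_neg at hc2
    have hsec := secant_le hp (hd0 (k+1)) hc2 (hd1 k)
    rw [hval (k+1), hval k] at hsec
    have hlt := part1 k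
    have h1 : 0 < 2 + a (k+1) := by linarith [hapos (k+1)]
    have h2 : 2*p/(2 + a k) < 2*p/(2 + a (k+1)) :=
      div_lt_div_of_pos_left (by linarith) h1 (by linarith)
    linarith
  have hanti : Antitone a := antitone_nat_of_succ_le fun n => (part1 n).le
  have hmono : Monotone d := monotone_nat_of_le_succ fun n => (part2 n).le
  have hbb : BddBelow (Set.range a) := ⟨0, by rintro x ⟨k, rfl⟩; exact (hapos k).le⟩
  have hba : BddAbove (Set.range d) := ⟨1, by rintro x ⟨k, rfl⟩; exact (hd1 k).le⟩
  have hLa : Tendsto a atTop (nhds (⨅ i, a i)) := tendsto_atTop_ciInf hanti hbb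
  have hDd : Tendsto d atTop (nhds (⨆ i, d i)) := tendsto_atTop_ciSup hmono hba
  set L := ⨅ i, a i with hL
  set D := ⨆ i, d i with hD
  have hL0 : 0 ≤ L := le_ciInf fun k => (hapos k).le
  have hD1 : D ≤ 1 := ciSup_le fun k => (hd1 k).le
  have hD0 : 0 < D := lt_of_lt_of_le (hd0 0) (le_ciSup hba 0)
  have hdp : Tendsto (fun k => d k ^ p) atTop (nhds (D ^ p)) :=
    hDd.rpow_const (Or.inl hD0.ne')
  have hXp : Tendsto (fun k => d k ^ (p-1)) atTop (nhds (D ^ (p-1))) :=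
    hDd.rpow_const (Or.inl hD0.ne')
  have ht1 : Tendsto (fun k => 2*p*(1 - d k)) atTop (nhds (2*p*(1-D))) :=
    (tendsto_const_nhds.sub hDd).const_mul _
  have ht2 : Tendsto (fun k => (2 + a k)*(1 - d k ^ p)) atTop (nhds ((2+L)*(1-D^p))) :=
    (tendsto_const_nhds.add hLa).mul (tendsto_const_nhds.sub hdp)
  have eq1 : 2*p*(1-D) = (2+L)*(1-D^p) :=
    tendsto_nhds_unique ht1 (ht2.congr fun k => (hcon k).symm)
  have hLshift : Tendsto (fun k => a (k+1)) atTop (nhds L) :=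
    hLa.comp (tendsto_add_atTop_nat 1)
  have ht3 : Tendsto (fun k => 2 - d k ^ (p-1) * (2 + a k)) atTop
      (nhds (2 - D^(p-1)*(2+L))) :=
    tendsto_const_nhds.sub (hXp.mul (tendsto_const_nhds.add hLa))
  have eq2 : L = 2 - D^(p-1)*(2+L) :=
    tendsto_nhds_unique hLshift (ht3.congr fun k => (hrec k).symm)
  have hDeq : D = 1 := by
    by_contra hne
    have hDlt : D < 1 := lt_of_le_of_ne hD1 hne
    have hkey := keyPhi hp ⟨hD0, hDlt⟩
    have hdpD : 0 < 1 - D ^ p := by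
      have : D ^ p < 1 := Real.rpow_lt_one hD0.le hDlt (by linarith); linarith
    have h4 : (2 + L)*(1 + D^(p-1)) = 4 := by linear_combination eq2
    have h5 : 4*(1-D^p) < ((2+L)*(1+D^(p-1)))*(1-D^p) :=
      calc 4*(1-D^p) < 2*p*(1-D)*(1+D^(p-1)) := hkey
        _ = ((2+L)*(1+D^(p-1)))*(1-D^p) := by rw [eq1]; ring
    rw [h4] at h5
    linarith
  have hLeq : L = 0 := by
    have h := eq2
    rw [hDeq, Real.one_rpow] at h
    linarith
  exact ⟨part1, part2, hLeq ▸ hLa, hDeq ▸ hDd⟩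

/-- The bubble sequences `(a_k)`, `(δ_k)` for `p > 2`. -/
def IsBubbleSeq (p : ℝ) (a δ : ℕ → ℝ) : Prop :=
  a 0 = 2 ∧ δ 0 = 1 ∧
  ∀ k : ℕ,
    δ (k + 1) ∈ Set.Ioo 0 (δ k) ∧
    2 * p / (2 + a k) * (1 - δ (k + 1) / δ k) - 1 + (δ (k + 1) / δ k) ^ p = 0 ∧
    a (k + 1) = 2 - (δ (k + 1) / δ k) ^ (p - 1) * (2 + a k) ∧
    a (k + 1) ∈ Set.Ioo (0:ℝ) 2

/-- Lemma 4.9 of the paper. With `d_k = δ_k / δ_{k-1}` (`k ≥ 1`):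
`a_{k-1} > a_k` and `d_k < d_{k+1}` for all `k ≥ 1`; moreover `a_k → 0` and `d_k → 1`. -/
theorem statement9 (p : ℝ) (hp : 2 < p) (a δ : ℕ → ℝ) (hb : IsBubbleSeq p a δ) :
    (∀ k : ℕ, a (k + 1) < a k) ∧
    (∀ k : ℕ, δ (k + 1) / δ k < δ (k + 2) / δ (k + 1)) ∧
    Tendsto a atTop (nhds 0) ∧
    Tendsto (fun k => δ (k + 1) / δ k) atTop (nhds 1) := by
  obtain ⟨ha0, hδ0, hk⟩ := hb
  have hδpos : ∀ k, 0 < δ k := by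
    intro k
    induction k with
    | zero => rw [hδ0]; norm_num
    | succ n ih => exact (hk n).1.1
  have hd0 : ∀ k, 0 < δ (k + 1) / δ k := fun k => div_pos (hk k).1.1 (hδpos k)
  have hd1 : ∀ k, δ (k + 1) / δ k < 1 := fun k => (div_lt_one (hδpos k)).mpr (hk k).1.2
  have hapos : ∀ k, 0 < a k := by
    intro k
    cases k with
    | zero => rw [ha0]; norm_num
    | succ n => exact (hk n).2.2.2.1
  exact aux_main p hp a (fun k => δ (k + 1) / δ k) hd0 hd1 hapos
    (fun k => (hk k).2.1) (fun k => (hk k).2.2.1)
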